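/- Let R = P ∪ Q for disjoint finite nonempty subsets P, Q of C. Then |R| · ‖F_R‖² − |P| · ‖F_P‖² − |Q| · ‖F_Q‖² = −(|P|·|Q|/(|P|+|Q|)) · ‖F_P − F_Q‖². -/

import Mathlib

/-! The sum of the features over `R` is the sum over `P` plus the sum over `Q`, so `F_R` is the
weighted average `(p • F_P + q • F_Q) / (p + q)` with `p = |P|`, `q = |Q|`. The theorem is then the
identity `(p + q) ‖(p a + q b) / (p + q)‖² = p ‖a‖² + q ‖b‖² - (p q / (p + q)) ‖a - b‖²`
for weighted means of two vectors. -/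

open Finset

variable {C E : Type*}

noncomputable def mean [NormedAddCommGroup E] [InnerProductSpace ℝ E]
    (f : C → E) (U : Finset C) : E :=
  (U.card : ℝ)⁻¹ • ∑ p ∈ U, f p

noncomputable def cost [NormedAddCommGroup E] [InnerProductSpace ℝ E]
    (f : C → E) (U : Finset C) : ℝ :=
  ∑ p ∈ U, ‖f p - mean f U‖ ^ 2

section

variable [NormedAddCommGroup E] [InnerProductSpace ℝ E]

theorem add_mul_norm_sq_weighted_mean {p q : ℝ} (hp : 0 ≤ p) (hq : 0 ≤ q) (a b : E) :
    (p + q) * ‖(p + q)⁻¹ • (p • a + q • b)‖ ^ 2 - p * ‖a‖ ^ 2 - q * ‖b‖ ^ 2 =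
      -(p * q / (p + q)) * ‖a - b‖ ^ 2 := by
  rcases (add_nonneg hp hq).eq_or_lt with hpq | hpq
  · obtain ⟨rfl, rfl⟩ : p = 0 ∧ q = 0 := ⟨by linarith, by linarith⟩
    simp
  simp only [← real_inner_self_eq_norm_sq, inner_add_add_self, inner_sub_sub_self,
    real_inner_smul_left, real_inner_smul_right, real_inner_comm a b]
  field_simp
  ring

theorem card_smul_mean (f : C → E) (U : Finset C) :
    (U.card : ℝ) • mean f U = ∑ p ∈ U, f p := by
  rcases U.eq_empty_or_nonempty with rfl | hU
  · simp
  · rw [mean, smul_smul, mul_inv_cancel₀ (by exact_mod_cast hU.card_pos.ne'), one_smul]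

theorem mean_union [DecidableEq C] (f : C → E) {P Q : Finset C} (hdisj : Disjoint P Q) :
    mean f (P ∪ Q) =
      ((P.card : ℝ) + Q.card)⁻¹ • ((P.card : ℝ) • mean f P + (Q.card : ℝ) • mean f Q) := by
  rw [mean, card_union_of_disjoint hdisj, sum_union hdisj, card_smul_mean, card_smul_mean]
  push_cast
  rfl

end

theorem card_mul_sq_mean_union_general [DecidableEq C] [NormedAddCommGroup E] [InnerProductSpace ℝ E]
    (f : C → E) (P Q : Finset C)
    (hdisj : Disjoint P Q) (R : Finset C) (hR : R = P ∪ Q) :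
    ((R.card : ℝ)) * ‖mean f R‖ ^ 2 - (P.card : ℝ) * ‖mean f P‖ ^ 2
        - (Q.card : ℝ) * ‖mean f Q‖ ^ 2 =
      -((P.card : ℝ) * (Q.card : ℝ) / ((P.card : ℝ) + (Q.card : ℝ))) *
        ‖mean f P - mean f Q‖ ^ 2 := by
  have hcard : (R.card : ℝ) = P.card + Q.card := by
    rw [hR, card_union_of_disjoint hdisj, Nat.cast_add]
  rw [hcard, hR, mean_union f hdisj]
  exact add_mul_norm_sq_weighted_mean (Nat.cast_nonneg _) (Nat.cast_nonneg _) _ _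

/-- For `R = P ∪ Q` with `P, Q` disjoint finite nonempty subsets of `C`,
`|R|·‖F_R‖² − |P|·‖F_P‖² − |Q|·‖F_Q‖² = −(|P|·|Q|/(|P|+|Q|))·‖F_P − F_Q‖²`. -/
theorem card_mul_sq_mean_union [DecidableEq C] [NormedAddCommGroup E] [InnerProductSpace ℝ E]
    (f : C → E) (P Q : Finset C) (hP : P.Nonempty) (hQ : Q.Nonempty)
    (hdisj : Disjoint P Q) (R : Finset C) (hR : R = P ∪ Q) :
    ((R.card : ℝ)) * ‖mean f R‖ ^ 2 - (P.card : ℝ) * ‖mean f P‖ ^ 2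
        - (Q.card : ℝ) * ‖mean f Q‖ ^ 2 =
      -((P.card : ℝ) * (Q.card : ℝ) / ((P.card : ℝ) + (Q.card : ℝ))) *
        ‖mean f P - mean f Q‖ ^ 2 :=
  card_mul_sq_mean_union_general f P Q hdisj R hR
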